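/- Let G be a 3-connected finite simple graph and (Y,S,Z) a proper separation of G of order 3 that is non-degenerate. Then the torso G⟦Z ∪ S⟧ is a faithful minor of G. -/

import Mathlib

variable {V : Type*} {W : Type*}

/-- A separation (Y,S,Z) of a graph: pairwise disjoint sets covering the vertex set,
with no edge between Y and Z. -/
def IsSeparation (G : SimpleGraph V) (Y S Z : Set V) : Prop :=
  Disjoint Y S ∧ Disjoint Y Z ∧ Disjoint S Z ∧ Y ∪ S ∪ Z = Set.univ ∧
    ∀ y ∈ Y, ∀ z ∈ Z, ¬ G.Adj y z

/-- `G` is `k`-connected: more than `k` vertices and no proper separation of order `< k`. -/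
def KConnected (k : ℕ) (G : SimpleGraph V) : Prop :=
  k < Nat.card V ∧
    ∀ Y S Z : Set V, IsSeparation G Y S Z → Y.Nonempty → Z.Nonempty → k ≤ S.ncard

/-- `G` is quasi-4-connected. -/
def Quasi4Connected (G : SimpleGraph V) : Prop :=
  KConnected 3 G ∧
    ∀ Y S Z : Set V, IsSeparation G Y S Z → S.ncard = 3 → Y.ncard ≤ 1 ∨ Z.ncard ≤ 1

/-- `T` is a `G`-tangle of order `k`. -/
def IsTangle (G : SimpleGraph V) (k : ℕ) (T : Set (Set V × Set V × Set V)) : Prop :=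
  (∀ p ∈ T, IsSeparation G p.1 p.2.1 p.2.2 ∧ p.2.1.ncard < k) ∧
  (∀ Y S Z : Set V, IsSeparation G Y S Z → S.ncard < k →
    (Y, S, Z) ∈ T ∨ (Z, S, Y) ∈ T) ∧
  (∀ p₁ ∈ T, ∀ p₂ ∈ T, ∀ p₃ ∈ T,
    (p₁.2.2 ∩ p₂.2.2 ∩ p₃.2.2 : Set V).Nonempty ∨
      ∃ u v : V, G.Adj u v ∧ (u ∈ p₁.2.2 ∨ v ∈ p₁.2.2) ∧
        (u ∈ p₂.2.2 ∨ v ∈ p₂.2.2) ∧ (u ∈ p₃.2.2 ∨ v ∈ p₃.2.2)) ∧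
  (∀ p ∈ T, (p.2.2 : Set V).Nonempty)

/-- The order `⪯` on separations: (Y,S,Z) ⪯ (Y',S',Z') iff S ∪ Z ⊊ S' ∪ Z', or
S ∪ Z = S' ∪ Z' and S ⊆ S'. -/
def SepLE (p q : Set V × Set V × Set V) : Prop :=
  p.2.1 ∪ p.2.2 ⊂ q.2.1 ∪ q.2.2 ∨
    (p.2.1 ∪ p.2.2 = q.2.1 ∪ q.2.2 ∧ p.2.1 ⊆ q.2.1)

/-- `p` is a `⪯`-minimal element of `T`. -/
def IsMinimalIn (T : Set (Set V × Set V × Set V)) (p : Set V × Set V × Set V) : Prop :=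
  p ∈ T ∧ ∀ q ∈ T, SepLE q p → q = p

/-- Two separations are orthogonal. (They cross if they are not orthogonal.) -/
def SepOrthogonal (p q : Set V × Set V × Set V) : Prop :=
  (p.1 ∪ p.2.1) ∩ (q.1 ∪ q.2.1) ⊆ p.2.1 ∩ q.2.1

/-- A separation (Y,S,Z) is degenerate: |Y| = 1 and S is an independent set. -/
def Degenerate (G : SimpleGraph V) (Y S Z : Set V) : Prop :=
  Y.ncard = 1 ∧ ∀ u ∈ S, ∀ v ∈ S, ¬ G.Adj u v

/-- The neighbourhood N(X): vertices outside X adjacent to a vertex of X. -/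
def Nbhd (G : SimpleGraph V) (X : Set V) : Set V :=
  {v | v ∉ X ∧ ∃ u ∈ X, G.Adj u v}

/-- `C` is (the vertex set of) a connected component of `G − X`. -/
def IsCompOutside (G : SimpleGraph V) (X C : Set V) : Prop :=
  C ⊆ Xᶜ ∧ (G.induce C).Connected ∧ ∀ u ∈ C, ∀ v : V, v ∉ X → G.Adj u v → v ∈ C

/-- The torso `G⟦X⟧` of `X` in `G`. -/
def torso (G : SimpleGraph V) (X : Set V) : SimpleGraph X where
  Adj u v := u ≠ v ∧ (G.Adj (u : V) (v : V) ∨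
    ∃ C : Set V, IsCompOutside G X C ∧ (u : V) ∈ Nbhd G C ∧ (v : V) ∈ Nbhd G C)
  symm := by
    constructor
    rintro u v ⟨hne, h | ⟨C, hC, hu, hv⟩⟩
    · exact ⟨hne.symm, Or.inl h.symm⟩
    · exact ⟨hne.symm, Or.inr ⟨C, hC, hv, hu⟩⟩
  loopless := by
    constructor
    intro u h
    exact h.1 rfl

/-- `H` is a minor of `G`. -/
def IsMinor (H : SimpleGraph W) (G : SimpleGraph V) : Prop :=
  ∃ M : W → Set V,
    (∀ w : W, (G.induce (M w)).Connected) ∧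
    (Pairwise fun w w' : W => Disjoint (M w) (M w')) ∧
    ∀ w w' : W, H.Adj w w' → ∃ u ∈ M w, ∃ v ∈ M w', G.Adj u v

/-- `M` is a faithful model of the graph `H` (with vertex set `X ⊆ V(G)`) in `G`. -/
def FaithfulModel (G : SimpleGraph V) (X : Set V) (H : SimpleGraph X)
    (M : X → Set V) : Prop :=
  (∀ w : X, (w : V) ∈ M w) ∧
  (∀ w : X, (G.induce (M w)).Connected) ∧
  (Pairwise fun w w' : X => Disjoint (M w) (M w')) ∧
  ∀ w w' : X, H.Adj w w' → ∃ u ∈ M w, ∃ v ∈ M w', G.Adj u v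

/-- `H` (a graph with vertex set `X ⊆ V(G)`) is a faithful minor of `G`. -/
def IsFaithfulMinor (G : SimpleGraph V) (X : Set V) (H : SimpleGraph X) : Prop :=
  ∃ M : X → Set V, FaithfulModel G X H M

/-- The projection of a separation of `G` to a minor with model `M`. -/
def projSep {X : Set V} (M : X → Set V) (p : Set V × Set V × Set V) :
    Set X × Set X × Set X :=
  ({w : X | M w ⊆ p.1}, {w : X | (M w ∩ p.2.1).Nonempty}, {w : X | M w ⊆ p.2.2})

/-- The graph TH₊₃: vertices 0,1,2,3 are v₁,v₂,v₃,v₄ (pairwise adjacent); 4,5,6 are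
w₁,w₂,w₃ with w₁ ~ v₁,v₂,v₃, w₂ ~ v₁,v₂,v₄, w₃ ~ v₁,v₃,v₄. -/
def TH3 : SimpleGraph (Fin 7) :=
  SimpleGraph.fromRel (fun u v =>
    (u.val < 4 ∧ v.val < 4) ∨
    (u.val = 4 ∧ (v.val = 0 ∨ v.val = 1 ∨ v.val = 2)) ∨
    (u.val = 5 ∧ (v.val = 0 ∨ v.val = 1 ∨ v.val = 3)) ∨
    (u.val = 6 ∧ (v.val = 0 ∨ v.val = 2 ∨ v.val = 3)))

/-- The graph TR₊₃: vertices 0,1,2 are v₁,v₂,v₃ (pairwise adjacent); 3,4,5 are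
w₁,w₂,w₃, each adjacent to each of v₁,v₂,v₃. -/
def TR3 : SimpleGraph (Fin 6) :=
  SimpleGraph.fromRel (fun u v =>
    (u.val < 3 ∧ v.val < 3) ∨ (3 ≤ u.val ∧ v.val < 3))

/-- A graph is exceptional if it embeds (injectively, preserving adjacency)
into TH₊₃ or into TR₊₃. -/
def Exceptional (H : SimpleGraph W) : Prop :=
  (∃ f : W → Fin 7, Function.Injective f ∧ ∀ u v : W, H.Adj u v → TH3.Adj (f u) (f v)) ∨
  (∃ f : W → Fin 6, Function.Injective f ∧ ∀ u v : W, H.Adj u v → TR3.Adj (f u) (f v))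

/-- `X` is a `k`-inseparable set of `G`. -/
def KInseparable (G : SimpleGraph V) (k : ℕ) (X : Set V) : Prop :=
  k < X.ncard ∧
    ¬ ∃ Y S Z : Set V, IsSeparation G Y S Z ∧ S.ncard ≤ k ∧
      (X ∩ Y).Nonempty ∧ (X ∩ Z).Nonempty

/-- A triconnected region: a maximal 2-inseparable set of size ≥ 4. -/
def TriconnectedRegion (G : SimpleGraph V) (R : Set V) : Prop :=
  KInseparable G 2 R ∧ 4 ≤ R.ncard ∧ ∀ R' : Set V, R ⊂ R' → ¬ KInseparable G 2 R'

/-- `H` is a topological subgraph of `G`. -/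
def IsTopologicalSubgraph (H : SimpleGraph W) (G : SimpleGraph V) : Prop :=
  ∃ (φ : W → V) (P : ∀ u v : W, H.Adj u v → G.Walk (φ u) (φ v)),
    Function.Injective φ ∧
    (∀ u v (h : H.Adj u v), (P u v h).IsPath) ∧
    (∀ u v (h : H.Adj u v), P u v h = (P v u h.symm).reverse) ∧
    (∀ u v (h : H.Adj u v), ∀ x ∈ (P u v h).support,
      x ∈ Set.range φ → x = φ u ∨ x = φ v) ∧
    (∀ u v (h : H.Adj u v), ∀ u' v' (h' : H.Adj u' v'), s(u, v) ≠ s(u', v') →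
      ∀ x ∈ (P u v h).support, x ∈ (P u' v' h').support →
        (x = φ u ∨ x = φ v) ∧ (x = φ u' ∨ x = φ v'))

/-- A quasi-4-connected region of a 3-connected graph. -/
def Quasi4Region (G : SimpleGraph V) (R : Set V) : Prop :=
  IsFaithfulMinor G R (torso G R) ∧ Quasi4Connected (torso G R) ∧
    ∀ C : Set V, IsCompOutside G R C → (Nbhd G C).ncard = 3

/-- A split vertex of a separation (Y₀,S₀,Z₀). -/
def SplitVertex (G : SimpleGraph V) (S₀ Z₀ : Set V) (z : V) : Prop :=
  z ∈ Z₀ ∧ ∀ C : Set V, IsCompOutside G (S₀ ∪ {z}) C → (Nbhd G C).ncard = 3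

/-- The graph obtained from `G` by contracting the edge `s₁s₂` onto `s₁`. -/
def contractEdge (G : SimpleGraph V) (s₁ s₂ : V) : SimpleGraph ({s₂}ᶜ : Set V) where
  Adj u v := u ≠ v ∧ (G.Adj (u : V) (v : V) ∨
    ((u : V) = s₁ ∧ G.Adj (v : V) s₂) ∨ ((v : V) = s₁ ∧ G.Adj (u : V) s₂))
  symm := by
    constructor
    rintro u v ⟨hne, h | h | h⟩
    · exact ⟨hne.symm, Or.inl h.symm⟩
    · exact ⟨hne.symm, Or.inr (Or.inr h)⟩
    · exact ⟨hne.symm, Or.inr (Or.inl h)⟩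
  loopless := by
    constructor
    intro u h
    exact h.1 rfl

/-- `s t` are the endvertices of a crossedge of two crossing non-degenerate minimal
separations of the tangle `T`, with `s ∈ S₁` and `t ∈ S₂`. -/
def IsNondegCrossedge (G : SimpleGraph V) (T : Set (Set V × Set V × Set V))
    (s t : V) : Prop :=
  ∃ p q : Set V × Set V × Set V,
    IsMinimalIn T p ∧ IsMinimalIn T q ∧
    ¬ Degenerate G p.1 p.2.1 p.2.2 ∧ ¬ Degenerate G q.1 q.2.1 q.2.2 ∧
    ¬ SepOrthogonal p q ∧ G.Adj s t ∧ p.2.1 ∩ q.1 = {s} ∧ q.2.1 ∩ p.1 = {t}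


/-!
Every component of `G - (Z ∪ S)` lies in `Y` and has all its attachments in `S`, so the torso
`G⟦Z ∪ S⟧` is `G[Z ∪ S]` plus at most the triangle on `S`. Keeping the vertices of `Z` as
singletons, it suffices to find a rooted triangle on `S` inside `G[Y ∪ S]`: three disjoint
connected branch sets, one through each vertex of `S`, pairwise joined by edges.

By 3-connectivity every nonempty `A ⊆ Y` has at least three neighbours, all in `Y ∪ S`. If `G[Y]`
is disconnected, two of its components each see all of `S`; if `Y` is a single vertex,
non-degeneracy supplies an edge inside `S`. Otherwise `G[Y]` is connected, and whenever `Y` splits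
into two connected parts that both see two terminals, a terminal seen by both parts together with
the two parts forms the triangle. If there is no triangle, take `Q ⊆ Y` maximal among connected
sets with connected complement `P = Y \ Q` that see at most one terminal. For a neighbour `r ∈ P`
of `Q` and a component `K` of `P - r`, maximality forces `Q` and `K` to see two different
terminals and the connected set `P \ K` to see the third, so `Q`, `K`, `P \ K` form the triangle.
-/

namespace SimpleGraph

variable {G : SimpleGraph V} {A B C K : Set V} {r x y : V}

lemma connected_induce_singleton (x : V) : (G.induce {x}).Connected := by
  rw [induce_singleton_eq_top]
  exact connected_top

lemma connected_induce_insert (hA : (G.induce A).Connected) (hy : y ∈ A) (hxy : G.Adj x y) :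
    (G.induce (insert x A)).Connected :=
  connected_induce_union (connected_induce_singleton x).preconnected hA.preconnected rfl hy hxy

lemma exists_adj_of_connected_induce (hA : (G.induce A).Connected) (hBA : B ⊆ A) (hx : x ∈ B)
    (hy : y ∈ A) (hyB : y ∉ B) : ∃ u ∈ B, ∃ v ∈ A, v ∉ B ∧ G.Adj u v := by
  obtain ⟨p⟩ := hA.preconnected ⟨x, hBA hx⟩ ⟨y, hy⟩
  obtain ⟨d, -, hd, hd'⟩ := p.exists_boundary_dart {v : A | v.1 ∈ B} (by exact hx) hyB
  exact ⟨d.fst, hd, d.snd, d.snd.2, hd', d.adj⟩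

lemma subset_of_connected_induce (hC : (G.induce C).Connected) (hCB : C ⊆ B)
    (hCK : (C ∩ K).Nonempty) (hK : ∀ u ∈ K, ∀ v ∈ B, G.Adj u v → v ∈ K) : C ⊆ K := by
  obtain ⟨x, hxC, hxK⟩ := hCK
  by_contra hsub
  obtain ⟨y, hyC, hyK⟩ := Set.not_subset.mp hsub
  obtain ⟨u, ⟨huC, huK⟩, v, hvC, hv, huv⟩ :=
    exists_adj_of_connected_induce hC Set.inter_subset_left ⟨hxC, hxK⟩ hyC fun h => hyK h.2
  exact hv ⟨hvC, hK u huK v (hCB hvC) huv⟩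

/-- Components of `G[A]` are handled as connected subsets of `A` closed under adjacency in `A`. -/
lemma exists_connected_closed (hA : A.Finite) (hx : x ∈ A) :
    ∃ K ⊆ A, x ∈ K ∧ (G.induce K).Connected ∧ ∀ u ∈ K, ∀ v ∈ A, G.Adj u v → v ∈ K := by
  let F := {K | K ⊆ A ∧ x ∈ K ∧ (G.induce K).Connected}
  have hF : F.Finite := hA.finite_subsets.subset fun K hK => hK.1
  obtain ⟨K, ⟨hKA, hxK, hK⟩, hmax⟩ :=
    hF.exists_maximal ⟨{x}, Set.singleton_subset_iff.mpr hx, rfl, connected_induce_singleton x⟩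
  refine ⟨K, hKA, hxK, hK, fun u hu v hv huv => ?_⟩
  have hins : insert v K ∈ F :=
    ⟨Set.insert_subset hv hKA, Set.mem_insert_of_mem _ hxK, connected_induce_insert hK hu huv.symm⟩
  exact hmax hins (Set.subset_insert _ _) (Set.mem_insert v K)

lemma exists_connected_induce_diff_singleton (hA : A.Finite) (hconn : (G.induce A).Connected)
    (hnt : A.Nontrivial) : ∃ v ∈ A, (G.induce (A \ {v})).Connected := by
  have : Finite A := hA
  have : Nontrivial A := hnt.coe_sort
  obtain ⟨v, hv⟩ := hconn.exists_connected_induce_compl_singleton_of_finite_nontrivial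
  refine ⟨v, v.2, hv.map ⟨fun w => ⟨w.1.1, w.1.2, fun h => w.2 (Subtype.ext h)⟩, fun h => h⟩ ?_⟩
  rintro ⟨w, hwA, hwv⟩
  exact ⟨⟨⟨w, hwA⟩, fun h => hwv (congrArg Subtype.val h)⟩, rfl⟩

lemma connected_induce_diff_of_closed (hAf : A.Finite) (hA : (G.induce A).Connected) (hr : r ∈ A)
    (hKA : K ⊆ A \ {r}) (hK : ∀ u ∈ K, ∀ v ∈ A \ {r}, G.Adj u v → v ∈ K) :
    (G.induce (A \ K)).Connected := by
  have hrK : r ∉ K := fun h => (hKA h).2 rfl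
  refine induce_connected_of_patches r ⟨hr, hrK⟩ fun {v} hv => ?_
  rcases eq_or_ne v r with rfl | hvr
  · exact ⟨{v}, Set.singleton_subset_iff.mpr hv, rfl, rfl, Reachable.refl _⟩
  obtain ⟨L, hLA, hvL, hL, hLcl⟩ :=
    exists_connected_closed (G := G) (hAf.sdiff (t := {r})) (x := v) ⟨hv.1, hvr⟩
  have hLK : Disjoint L K := Set.disjoint_left.mpr fun w hwL hwK =>
    hv.2 (subset_of_connected_induce hL hLA ⟨w, hwL, hwK⟩ hK hvL)
  obtain ⟨u, huL, w, hwA, hwL, huw⟩ :=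
    exists_adj_of_connected_induce hA (hLA.trans Set.sdiff_subset) hvL hr fun h => (hLA h).2 rfl
  obtain rfl : w = r := by
    by_contra hne
    exact hwL (hLcl u huL w ⟨hwA, hne⟩ huw)
  refine ⟨insert w L, Set.insert_subset ⟨hr, hrK⟩ fun z hz => ⟨(hLA hz).1,
    Set.disjoint_left.mp hLK hz⟩, Set.mem_insert _ _, Set.mem_insert_of_mem _ hvL, ?_⟩
  exact (connected_induce_insert hL huL huw.symm).preconnected _ _

end SimpleGraph

lemma exists_ne_and_ne_fin_three : ∀ i j : Fin 3, ∃ k, i ≠ k ∧ j ≠ k := by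
  decide

lemma exists_perm_fin_three : ∀ i j k : Fin 3, i ≠ j → i ≠ k → j ≠ k →
    ∃ σ : Equiv.Perm (Fin 3), σ 0 = i ∧ σ 1 = j ∧ σ 2 = k := by
  decide

lemma Finset.exists_fin_three_of_two_le_card : ∀ A B : Finset (Fin 3), 2 ≤ A.card →
    2 ≤ B.card → A ∪ B = Finset.univ →
    ∃ k i j, k ≠ i ∧ k ≠ j ∧ i ≠ j ∧ k ∈ A ∧ k ∈ B ∧ i ∈ A ∧ j ∈ B := by
  decide

lemma Finset.exists_fin_three_of_card_le_one : ∀ A B : Finset (Fin 3), A.card ≤ 1 →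
    B.card ≤ 1 → 2 ≤ (A ∪ B).card →
    ∃ k i j, k ≠ i ∧ k ≠ j ∧ i ≠ j ∧ k ∈ A ∧ i ∈ B ∧ j ∉ A ∧ j ∉ B := by
  decide

lemma Set.exists_injective_fin_three_of_ncard_eq_three {S : Set V} (hS : S.ncard = 3) :
    ∃ t : Fin 3 → V, Function.Injective t ∧ Set.range t = S := by
  obtain ⟨a, b, c, hab, hac, hbc, rfl⟩ := Set.ncard_eq_three.mp hS
  refine ⟨![a, b, c], ?_, ?_⟩
  · intro i j h
    fin_cases i <;> fin_cases j <;> simp_all [eq_comm]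
  · ext v
    simp only [Set.mem_range, Fin.exists_fin_succ, Set.mem_insert_iff, Set.mem_singleton_iff]
    simp [eq_comm]

def IsBranchSet (G : SimpleGraph V) (Y : Set V) (s : V) (B : Set V) : Prop :=
  s ∈ B ∧ B ⊆ insert s Y ∧ (G.induce B).Connected

def RootedTriangle (G : SimpleGraph V) (Y : Set V) (t : Fin 3 → V) : Prop :=
  ∃ B : Fin 3 → Set V, (∀ m, IsBranchSet G Y (t m) (B m)) ∧
    (Pairwise fun m m' => Disjoint (B m) (B m')) ∧
    Pairwise fun m m' => ∃ u ∈ B m, ∃ v ∈ B m', G.Adj u v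

lemma isBranchSet_singleton (G : SimpleGraph V) (Y : Set V) (s : V) : IsBranchSet G Y s {s} :=
  ⟨rfl, Set.singleton_subset_iff.mpr (Set.mem_insert s Y), G.connected_induce_singleton s⟩

lemma rootedTriangle_of_branchSets {G : SimpleGraph V} {Y : Set V} {t : Fin 3 → V}
    {i j k : Fin 3} (hij : i ≠ j) (hik : i ≠ k) (hjk : j ≠ k) {Bi Bj Bk : Set V}
    (hi : IsBranchSet G Y (t i) Bi) (hj : IsBranchSet G Y (t j) Bj)
    (hk : IsBranchSet G Y (t k) Bk)
    (dij : Disjoint Bi Bj) (dik : Disjoint Bi Bk) (djk : Disjoint Bj Bk)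
    (aij : ∃ u ∈ Bi, ∃ v ∈ Bj, G.Adj u v) (aik : ∃ u ∈ Bi, ∃ v ∈ Bk, G.Adj u v)
    (ajk : ∃ u ∈ Bj, ∃ v ∈ Bk, G.Adj u v) : RootedTriangle G Y t := by
  obtain ⟨σ, rfl, rfl, rfl⟩ := exists_perm_fin_three i j k hij hik hjk
  have flip : ∀ {P Q : Set V}, (∃ u ∈ P, ∃ v ∈ Q, G.Adj u v) → ∃ u ∈ Q, ∃ v ∈ P, G.Adj u v :=
    fun ⟨u, hu, v, hv, huv⟩ => ⟨v, hv, u, hu, huv.symm⟩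
  refine ⟨fun m => ![Bi, Bj, Bk] (σ.symm m), fun m => ?_, fun m m' hmm' => ?_,
    fun m m' hmm' => ?_⟩
  · obtain ⟨n, rfl⟩ := σ.surjective m
    fin_cases n <;> simpa
  all_goals
    obtain ⟨n, rfl⟩ := σ.surjective m
    obtain ⟨n', rfl⟩ := σ.surjective m'
    replace hmm' : n ≠ n' := fun h => hmm' (congrArg σ h)
    fin_cases n <;> fin_cases n' <;> simp at hmm' ⊢ <;>
      first | assumption | exact Disjoint.symm ‹_› | exact flip ‹_›

lemma RootedTriangle.exists_faithfulModel {G : SimpleGraph V} {Y : Set V} {t : Fin 3 → V}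
    (h : RootedTriangle G Y t) (ht : Function.Injective t) :
    ∃ M : Set.range t → Set V, FaithfulModel G (Set.range t) ⊤ M ∧ ∀ w, M w ⊆ insert ↑w Y := by
  obtain ⟨B, hB, hdisj, hadj⟩ := h
  let e := Equiv.ofInjective t ht
  have he : ∀ w, t (e.symm w) = w := Equiv.apply_ofInjective_symm ht
  refine ⟨fun w => B (e.symm w), ⟨fun w => ?_, fun w => (hB _).2.2,
    fun w w' h => hdisj (e.symm.injective.ne h), fun w w' h => hadj (e.symm.injective.ne h.ne)⟩,
    fun w => ?_⟩
  · simpa [he] using (hB (e.symm w)).1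
  · simpa [he] using (hB (e.symm w)).2.1

/-- `Y` is the side of a separation `(Y, range t, Z)` of a 3-connected graph, seen from `Y`. -/
structure IsLobe (G : SimpleGraph V) (Y : Set V) (t : Fin 3 → V) : Prop where
  finite : Y.Finite
  injective : Function.Injective t
  terminal_not_mem : ∀ m, t m ∉ Y
  adj_mem : ∀ y ∈ Y, ∀ v, G.Adj y v → v ∈ Y ∨ v ∈ Set.range t
  three_le_ncard_nbhd : ∀ A ⊆ Y, A.Nonempty → 3 ≤ (Nbhd G A).ncard

open Classical in
noncomputable def seenTerminals (G : SimpleGraph V) (t : Fin 3 → V) (X : Set V) :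
    Finset (Fin 3) :=
  Finset.univ.filter fun m => t m ∈ Nbhd G X

def IsPureSide (G : SimpleGraph V) (Y : Set V) (t : Fin 3 → V) (Q : Set V) : Prop :=
  Q ⊆ Y ∧ (G.induce Q).Connected ∧ (G.induce (Y \ Q)).Connected ∧
    (seenTerminals G t Q).card ≤ 1

lemma mem_seenTerminals {G : SimpleGraph V} {t : Fin 3 → V} {X : Set V} {m : Fin 3} :
    m ∈ seenTerminals G t X ↔ t m ∈ Nbhd G X := by
  simp [seenTerminals]

lemma exists_adj_of_mem_seenTerminals {G : SimpleGraph V} {t : Fin 3 → V} {X : Set V}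
    {m : Fin 3} (h : m ∈ seenTerminals G t X) : ∃ x ∈ X, G.Adj (t m) x := by
  obtain ⟨-, x, hx, hxt⟩ := mem_seenTerminals.mp h
  exact ⟨x, hx, hxt.symm⟩

lemma isBranchSet_insert {G : SimpleGraph V} {Y X : Set V} {t : Fin 3 → V} (hX : X ⊆ Y)
    (hc : (G.induce X).Connected) {m : Fin 3} (hm : m ∈ seenTerminals G t X) :
    IsBranchSet G Y (t m) (insert (t m) X) := by
  obtain ⟨x, hx, hadj⟩ := exists_adj_of_mem_seenTerminals hm
  exact ⟨Set.mem_insert _ _, Set.insert_subset_insert hX, G.connected_induce_insert hc hx hadj⟩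

lemma two_le_card_seenTerminals_of_maximal {G : SimpleGraph V} {Y Q Q' : Set V} {t : Fin 3 → V}
    (hmax : Maximal (IsPureSide G Y t) Q) (hQQ' : Q ⊂ Q') (hQ'Y : Q' ⊆ Y)
    (hQ' : (G.induce Q').Connected) (hP' : (G.induce (Y \ Q')).Connected) :
    2 ≤ (seenTerminals G t Q').card := by
  by_contra h
  exact hQQ'.2 (hmax.2 ⟨hQ'Y, hQ', hP', by omega⟩ hQQ'.1)

namespace IsLobe

variable {G : SimpleGraph V} {Y A B C K P Q X : Set V} {t : Fin 3 → V}

lemma ncard_nbhd_le (hL : IsLobe G Y t) (hA : A ⊆ Y) :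
    (Nbhd G A).ncard ≤ (Nbhd G A ∩ Y).ncard + (seenTerminals G t A).card := by
  have hsub : Nbhd G A ⊆ (Nbhd G A ∩ Y) ∪ t '' (seenTerminals G t A) := by
    intro v hv
    obtain ⟨-, u, hu, huv⟩ := id hv
    rcases hL.adj_mem u (hA hu) v huv with hvY | ⟨m, rfl⟩
    · exact Or.inl ⟨hv, hvY⟩
    · exact Or.inr ⟨m, mem_seenTerminals.mpr hv, rfl⟩
  calc (Nbhd G A).ncard ≤ ((Nbhd G A ∩ Y) ∪ t '' (seenTerminals G t A)).ncard :=
        Set.ncard_le_ncard hsub (hL.finite.inter_of_right _ |>.union (Set.toFinite _))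
    _ ≤ (Nbhd G A ∩ Y).ncard + (t '' (seenTerminals G t A)).ncard := Set.ncard_union_le _ _
    _ ≤ (Nbhd G A ∩ Y).ncard + (seenTerminals G t A).card := by
        grw [Set.ncard_image_le (Set.toFinite _), Set.ncard_coe_finset]

lemma false_of_nbhd_inter_subset_singleton (hL : IsLobe G Y t) (hAY : A ⊆ Y) (hA : A.Nonempty)
    (h1 : (seenTerminals G t A).card ≤ 1) {r : V} (hN : Nbhd G A ∩ Y ⊆ {r}) : False := by
  have h3 := hL.three_le_ncard_nbhd A hAY hA
  have hle := hL.ncard_nbhd_le hAY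
  have := Set.ncard_le_ncard hN (Set.finite_singleton r)
  rw [Set.ncard_singleton] at this
  omega

lemma seenTerminals_eq_univ (hL : IsLobe G Y t) (hCY : C ⊆ Y) (hC : C.Nonempty)
    (hcl : ∀ u ∈ C, ∀ v ∈ Y, G.Adj u v → v ∈ C) : seenTerminals G t C = Finset.univ := by
  have h3 := hL.three_le_ncard_nbhd C hCY hC
  have hle := hL.ncard_nbhd_le hCY
  have hempty : Nbhd G C ∩ Y = ∅ :=
    Set.eq_empty_of_forall_notMem fun v ⟨⟨hvC, u, hu, huv⟩, hv⟩ => hvC (hcl u hu v hv huv)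
  rw [hempty, Set.ncard_empty] at hle
  exact Finset.eq_univ_of_card _ (le_antisymm (Finset.card_le_univ _) (by simpa using h3.trans hle))

lemma seenTerminals_union (hL : IsLobe G Y t) (hA : A ⊆ Y) (hB : B ⊆ Y) :
    seenTerminals G t (A ∪ B) = seenTerminals G t A ∪ seenTerminals G t B := by
  ext m
  simp only [Finset.mem_union, mem_seenTerminals, Nbhd, Set.mem_ofPred_eq, Set.mem_union]
  have hA' := fun h => hL.terminal_not_mem m (hA h)
  have hB' := fun h => hL.terminal_not_mem m (hB h)
  constructor
  · rintro ⟨-, u, hu | hu, huv⟩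
    · exact Or.inl ⟨hA', u, hu, huv⟩
    · exact Or.inr ⟨hB', u, hu, huv⟩
  · rintro (⟨-, u, hu, huv⟩ | ⟨-, u, hu, huv⟩)
    · exact ⟨not_or.mpr ⟨hA', hB'⟩, u, Or.inl hu, huv⟩
    · exact ⟨not_or.mpr ⟨hA', hB'⟩, u, Or.inr hu, huv⟩

lemma terminal_not_mem_insert (hL : IsLobe G Y t) (hP : P ⊆ Y) {m m' : Fin 3} (hmm' : m ≠ m') :
    t m ∉ insert (t m') P := by
  rintro (h | h)
  · exact hmm' (hL.injective h)
  · exact hL.terminal_not_mem m (hP h)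

lemma disjoint_insert (hL : IsLobe G Y t) (hP : P ⊆ Y) (hQ : Q ⊆ Y) {m m' : Fin 3}
    (hmm' : m ≠ m') (hPQ : Disjoint P Q) : Disjoint (insert (t m) P) (insert (t m') Q) := by
  rw [Set.disjoint_insert_left, Set.disjoint_insert_right]
  exact ⟨hL.terminal_not_mem_insert hQ hmm', fun h => hL.terminal_not_mem m' (hP h), hPQ⟩

lemma rootedTriangle_of_pieces (hL : IsLobe G Y t) {i j k : Fin 3} (hij : i ≠ j) (hik : i ≠ k)
    (hjk : j ≠ k) {Xi Xj Xk : Set V} (hXi : Xi ⊆ Y) (hXj : Xj ⊆ Y) (hXk : Xk ⊆ Y)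
    (ci : (G.induce Xi).Connected) (cj : (G.induce Xj).Connected) (ck : (G.induce Xk).Connected)
    (dij : Disjoint Xi Xj) (dik : Disjoint Xi Xk) (djk : Disjoint Xj Xk)
    (aij : ∃ u ∈ Xi, ∃ v ∈ Xj, G.Adj u v) (aik : ∃ u ∈ Xi, ∃ v ∈ Xk, G.Adj u v)
    (ajk : ∃ u ∈ Xj, ∃ v ∈ Xk, G.Adj u v) (si : i ∈ seenTerminals G t Xi)
    (sj : j ∈ seenTerminals G t Xj) (sk : k ∈ seenTerminals G t Xk) : RootedTriangle G Y t := by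
  have lift : ∀ {m m' : Fin 3} {P Q : Set V}, (∃ u ∈ P, ∃ v ∈ Q, G.Adj u v) →
      ∃ u ∈ insert (t m) P, ∃ v ∈ insert (t m') Q, G.Adj u v :=
    fun ⟨u, hu, v, hv, huv⟩ => ⟨u, Set.mem_insert_of_mem _ hu, v, Set.mem_insert_of_mem _ hv, huv⟩
  exact rootedTriangle_of_branchSets hij hik hjk (isBranchSet_insert hXi ci si)
    (isBranchSet_insert hXj cj sj) (isBranchSet_insert hXk ck sk)
    (hL.disjoint_insert hXi hXj hij dij) (hL.disjoint_insert hXi hXk hik dik)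
    (hL.disjoint_insert hXj hXk hjk djk) (lift aij) (lift aik) (lift ajk)

lemma rootedTriangle_of_split (hL : IsLobe G Y t) (hP : P ⊆ Y) (hQ : Q ⊆ Y) (hU : P ∪ Q = Y)
    (hPQ : Disjoint P Q) (cP : (G.induce P).Connected) (cQ : (G.induce Q).Connected)
    (aPQ : ∃ u ∈ P, ∃ v ∈ Q, G.Adj u v) (h2P : 2 ≤ (seenTerminals G t P).card)
    (h2Q : 2 ≤ (seenTerminals G t Q).card) : RootedTriangle G Y t := by
  obtain ⟨u, hu, v, hv, huv⟩ := aPQ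
  have hall : seenTerminals G t P ∪ seenTerminals G t Q = Finset.univ := by
    rw [← hL.seenTerminals_union hP hQ, hU]
    exact hL.seenTerminals_eq_univ subset_rfl ⟨u, hU ▸ Or.inl hu⟩ fun _ _ _ hv _ => hv
  obtain ⟨k, i, j, hki, hkj, hij, hkP, hkQ, hiP, hjQ⟩ :=
    Finset.exists_fin_three_of_two_le_card _ _ h2P h2Q hall
  obtain ⟨p, hp, hkp⟩ := exists_adj_of_mem_seenTerminals hkP
  obtain ⟨q, hq, hkq⟩ := exists_adj_of_mem_seenTerminals hkQ
  exact rootedTriangle_of_branchSets hki hkj hij (isBranchSet_singleton G Y (t k))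
    (isBranchSet_insert hP cP hiP) (isBranchSet_insert hQ cQ hjQ)
    (Set.disjoint_singleton_left.mpr (hL.terminal_not_mem_insert hP hki))
    (Set.disjoint_singleton_left.mpr (hL.terminal_not_mem_insert hQ hkj))
    (hL.disjoint_insert hP hQ hij hPQ) ⟨t k, rfl, p, Set.mem_insert_of_mem _ hp, hkp⟩
    ⟨t k, rfl, q, Set.mem_insert_of_mem _ hq, hkq⟩
    ⟨u, Set.mem_insert_of_mem _ hu, v, Set.mem_insert_of_mem _ hv, huv⟩

lemma rootedTriangle_of_partition (hL : IsLobe G Y t) {K R : Set V} (hQY : Q ⊆ Y) (hKY : K ⊆ Y)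
    (hRY : R ⊆ Y) (hU : Q ∪ K ∪ R = Y) (dQK : Disjoint Q K) (dQR : Disjoint Q R)
    (dKR : Disjoint K R) (cQ : (G.induce Q).Connected) (cK : (G.induce K).Connected)
    (cR : (G.induce R).Connected) (aQK : ∃ u ∈ Q, ∃ v ∈ K, G.Adj u v)
    (aQR : ∃ u ∈ Q, ∃ v ∈ R, G.Adj u v) (aKR : ∃ u ∈ K, ∃ v ∈ R, G.Adj u v)
    (hQ1 : (seenTerminals G t Q).card ≤ 1) (hK1 : (seenTerminals G t K).card ≤ 1)
    (h2 : 2 ≤ (seenTerminals G t Q ∪ seenTerminals G t K).card) : RootedTriangle G Y t := by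
  obtain ⟨k, m, c, hkm, hkc, hmc, hkQ, hmK, hcQ, hcK⟩ :=
    Finset.exists_fin_three_of_card_le_one _ _ hQ1 hK1 h2
  obtain ⟨u, hu, -⟩ := id aQK
  have hall := hL.seenTerminals_eq_univ subset_rfl ⟨u, hQY hu⟩ fun _ _ _ h _ => h
  rw [← hU, hL.seenTerminals_union (Set.union_subset hQY hKY) hRY,
    hL.seenTerminals_union hQY hKY] at hall
  have hc : c ∈ seenTerminals G t Q ∪ seenTerminals G t K ∪ seenTerminals G t R :=
    hall ▸ Finset.mem_univ c
  exact hL.rootedTriangle_of_pieces hkm hkc hmc hQY hKY hRY cQ cK cR dQK dQR dKR aQK aQR aKR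
    hkQ hmK (by simpa [hcQ, hcK] using hc)

lemma rootedTriangle_of_not_connected (hL : IsLobe G Y t) (hY : Y.Nonempty)
    (hconn : ¬ (G.induce Y).Connected) : RootedTriangle G Y t := by
  obtain ⟨x, hx⟩ := hY
  obtain ⟨C, hCY, hxC, hC, hCcl⟩ := G.exists_connected_closed hL.finite hx
  obtain ⟨y, hyY, hyC⟩ : ∃ y ∈ Y, y ∉ C := by
    by_contra! h
    exact hconn (Set.Subset.antisymm hCY h ▸ hC)
  obtain ⟨D, hDY, hyD, hD, hDcl⟩ := G.exists_connected_closed hL.finite hyY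
  have hCD : Disjoint C D := Set.disjoint_left.mpr fun w hwC hwD =>
    hyC (G.subset_of_connected_induce hD hDY ⟨w, hwD, hwC⟩ hCcl hyD)
  have sC := hL.seenTerminals_eq_univ hCY ⟨x, hxC⟩ hCcl
  have sD := hL.seenTerminals_eq_univ hDY ⟨y, hyD⟩ hDcl
  obtain ⟨c, hc, hc2⟩ := exists_adj_of_mem_seenTerminals (sC ▸ Finset.mem_univ 2)
  obtain ⟨d, hd, hd0⟩ := exists_adj_of_mem_seenTerminals (sD ▸ Finset.mem_univ 0)
  obtain ⟨d', hd', hd'2⟩ := exists_adj_of_mem_seenTerminals (sD ▸ Finset.mem_univ 2)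
  exact rootedTriangle_of_branchSets (i := 0) (j := 1) (k := 2) (by decide) (by decide)
    (by decide) (isBranchSet_insert hCY hC (sC ▸ Finset.mem_univ 0))
    (isBranchSet_insert hDY hD (sD ▸ Finset.mem_univ 1)) (isBranchSet_singleton G Y (t 2))
    (hL.disjoint_insert hCY hDY (by decide) hCD)
    (Set.disjoint_singleton_right.mpr (hL.terminal_not_mem_insert hCY (by decide)))
    (Set.disjoint_singleton_right.mpr (hL.terminal_not_mem_insert hDY (by decide)))
    ⟨t 0, Set.mem_insert _ _, d, Set.mem_insert_of_mem _ hd, hd0⟩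
    ⟨c, Set.mem_insert_of_mem _ hc, t 2, rfl, hc2.symm⟩
    ⟨d', Set.mem_insert_of_mem _ hd', t 2, rfl, hd'2.symm⟩

lemma rootedTriangle_of_adj (hL : IsLobe G Y t) {y : V} (hy : y ∈ Y)
    (hyt : seenTerminals G t {y} = Finset.univ) {i j : Fin 3} (hij : G.Adj (t i) (t j)) :
    RootedTriangle G Y t := by
  have hij' : i ≠ j := fun h => G.ne_of_adj hij (congrArg t h)
  obtain ⟨k, hik, hjk⟩ := exists_ne_and_ne_fin_three i j
  have hyY : {y} ⊆ Y := Set.singleton_subset_iff.mpr hy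
  have hadj : ∀ m, G.Adj (t m) y := fun m => by
    obtain ⟨z, hz, hmz⟩ := exists_adj_of_mem_seenTerminals (hyt ▸ Finset.mem_univ m)
    rwa [Set.mem_singleton_iff.mp hz] at hmz
  exact rootedTriangle_of_branchSets hij' hik hjk (isBranchSet_singleton G Y (t i))
    (isBranchSet_singleton G Y (t j))
    (isBranchSet_insert hyY (G.connected_induce_singleton y) (hyt ▸ Finset.mem_univ k))
    (Set.disjoint_singleton.mpr (hL.injective.ne hij'))
    (Set.disjoint_singleton_left.mpr (hL.terminal_not_mem_insert hyY hik))
    (Set.disjoint_singleton_left.mpr (hL.terminal_not_mem_insert hyY hjk))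
    ⟨t i, rfl, t j, rfl, hij⟩ ⟨t i, rfl, y, Set.mem_insert_of_mem _ rfl, hadj i⟩
    ⟨t j, rfl, y, Set.mem_insert_of_mem _ rfl, hadj j⟩

lemma card_seenTerminals_le_one_of_split (hL : IsLobe G Y t) (hconn : (G.induce Y).Connected)
    (hRT : ¬ RootedTriangle G Y t) (hAY : A ⊆ Y) (hA : (G.induce A).Connected)
    (hYA : (G.induce (Y \ A)).Connected) (h2 : 2 ≤ (seenTerminals G t (Y \ A)).card) :
    (seenTerminals G t A).card ≤ 1 := by
  by_contra h
  obtain ⟨x, hx⟩ := Set.nonempty_coe_sort.mp hA.nonempty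
  obtain ⟨y, hy⟩ := Set.nonempty_coe_sort.mp hYA.nonempty
  obtain ⟨a, ha, b, hbY, hbA, hab⟩ := G.exists_adj_of_connected_induce hconn hAY hx hy.1 hy.2
  exact hRT (hL.rootedTriangle_of_split hAY Set.sdiff_subset (Set.union_sdiff_cancel hAY)
    Set.disjoint_sdiff_right hA hYA ⟨a, ha, b, ⟨hbY, hbA⟩, hab⟩ (by omega) h2)

lemma exists_isPureSide (hL : IsLobe G Y t) (hconn : (G.induce Y).Connected)
    (hnt : Y.Nontrivial) (hRT : ¬ RootedTriangle G Y t) : ∃ Q, IsPureSide G Y t Q := by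
  obtain ⟨v, hv, hcv⟩ := G.exists_connected_induce_diff_singleton hL.finite hconn hnt
  have hvY : {v} ⊆ Y := Set.singleton_subset_iff.mpr hv
  by_cases h1 : (seenTerminals G t {v}).card ≤ 1
  · exact ⟨{v}, hvY, G.connected_induce_singleton v, hcv, h1⟩
  have hcomp : Y \ (Y \ {v}) = {v} := Set.sdiff_sdiff_cancel_left hvY
  have hvc : (G.induce (Y \ (Y \ {v}))).Connected := by
    rw [hcomp]
    exact G.connected_induce_singleton v
  exact ⟨Y \ {v}, Set.sdiff_subset, hcv, hvc, hL.card_seenTerminals_le_one_of_split hconn hRT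
    Set.sdiff_subset hcv hvc (by rw [hcomp]; omega)⟩

lemma nonempty_sdiff_singleton_of_isPureSide (hL : IsLobe G Y t) (hQ : IsPureSide G Y t Q)
    (r : V) : ((Y \ Q) \ {r}).Nonempty := by
  obtain ⟨hQY, hQc, -, hQ1⟩ := hQ
  refine Set.nonempty_iff_ne_empty.mpr fun hPr => hL.false_of_nbhd_inter_subset_singleton hQY
    (Set.nonempty_coe_sort.mp hQc.nonempty) hQ1 (r := r) fun v ⟨⟨hvQ, _⟩, hvY⟩ => ?_
  by_contra hvr
  exact (Set.eq_empty_iff_forall_notMem.mp hPr) v ⟨⟨hvY, hvQ⟩, hvr⟩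

theorem rootedTriangle_of_component (hL : IsLobe G Y t) (hconn : (G.induce Y).Connected)
    (hmax : Maximal (IsPureSide G Y t) Q) {u r : V} (huQ : u ∈ Q) (hrP : r ∈ Y \ Q)
    (hur : G.Adj u r) (hKPr : K ⊆ (Y \ Q) \ {r}) (hKne : K.Nonempty) (hK : (G.induce K).Connected)
    (hKcl : ∀ a ∈ K, ∀ v ∈ (Y \ Q) \ {r}, G.Adj a v → v ∈ K) : RootedTriangle G Y t := by
  by_contra hRT
  obtain ⟨hQY, hQ, hP, hQ1⟩ := hmax.1
  set P := Y \ Q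
  have hKP : K ⊆ P := hKPr.trans Set.sdiff_subset
  have hKY : K ⊆ Y := hKP.trans Set.sdiff_subset
  have hrK : r ∉ K := fun h => (hKPr h).2 rfl
  have hPKY : P \ K ⊆ Y := Set.sdiff_subset.trans Set.sdiff_subset
  have hPK : (G.induce (P \ K)).Connected :=
    G.connected_induce_diff_of_closed (hL.finite.subset Set.sdiff_subset) hP hrP hKPr hKcl
  have cYK : (G.induce (Y \ K)).Connected := by
    have : Y \ K = Q ∪ (P \ K) := by
      ext v
      have := @hKP v
      simp only [P, Set.mem_sdiff, Set.mem_union] at this ⊢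
      have := @hQY v
      tauto
    rw [this]
    exact G.connected_induce_union hQ.preconnected hPK.preconnected huQ ⟨hrP, hrK⟩ hur
  -- `Y \ K` strictly contains `Q`, so by maximality it sees two terminals.
  have hK1 : (seenTerminals G t K).card ≤ 1 :=
    hL.card_seenTerminals_le_one_of_split hconn hRT hKY hK cYK
      (two_le_card_seenTerminals_of_maximal hmax
        ⟨fun v hv => ⟨hQY hv, fun h => (hKP h).2 hv⟩, fun h => hrP.2 (h ⟨hrP.1, hrK⟩)⟩
        Set.sdiff_subset cYK (by rwa [Set.sdiff_sdiff_cancel_left hKY]))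
  -- Otherwise `r` and a single terminal would be the only neighbours of `K`.
  obtain ⟨a, haK, b, hbQ, hab⟩ : ∃ a ∈ K, ∃ b ∈ Q, G.Adj a b := by
    by_contra! h
    refine hL.false_of_nbhd_inter_subset_singleton hKY hKne hK1 (r := r)
      fun v ⟨⟨hvK, a, haK, hav⟩, hvY⟩ => ?_
    by_contra hvr
    by_cases hvQ : v ∈ Q
    · exact h a haK v hvQ hav
    · exact hvK (hKcl a haK v ⟨⟨hvY, hvQ⟩, hvr⟩ hav)
  have hQKY : Q ∪ K ⊆ Y := Set.union_subset hQY hKY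
  have hPK' : P \ K = Y \ (Q ∪ K) := Set.sdiff_sdiff
  have hQK := two_le_card_seenTerminals_of_maximal hmax
    ⟨Set.subset_union_left, fun h => (hKP haK).2 (h (Or.inr haK))⟩ hQKY
    (G.connected_induce_union hQ.preconnected hK.preconnected hbQ haK hab.symm) (hPK' ▸ hPK)
  rw [hL.seenTerminals_union hQY hKY] at hQK
  obtain ⟨a', ha'K, b', hb'P, hb'K, ha'b'⟩ := G.exists_adj_of_connected_induce hP hKP haK hrP hrK
  exact hRT (hL.rootedTriangle_of_partition hQY hKY hPKY
    (by rw [hPK', Set.union_sdiff_cancel hQKY])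
    (Set.disjoint_left.mpr fun v hvQ hvK => (hKP hvK).2 hvQ)
    (Set.disjoint_left.mpr fun v hvQ hv => hv.1.2 hvQ) Set.disjoint_sdiff_right hQ hK hPK
    ⟨b, hbQ, a, haK, hab.symm⟩ ⟨u, huQ, r, ⟨hrP, hrK⟩, hur⟩ ⟨a', ha'K, b', ⟨hb'P, hb'K⟩, ha'b'⟩
    hQ1 hK1 hQK)

theorem rootedTriangle_of_maximal (hL : IsLobe G Y t) (hconn : (G.induce Y).Connected)
    (hmax : Maximal (IsPureSide G Y t) Q) : RootedTriangle G Y t := by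
  obtain ⟨hQY, hQ, hP, -⟩ := hmax.1
  obtain ⟨q, hq⟩ := Set.nonempty_coe_sort.mp hQ.nonempty
  obtain ⟨p, hp⟩ := Set.nonempty_coe_sort.mp hP.nonempty
  obtain ⟨u, huQ, r, hrY, hrQ, hur⟩ := G.exists_adj_of_connected_induce hconn hQY hq hp.1 hp.2
  obtain ⟨x, hx⟩ := hL.nonempty_sdiff_singleton_of_isPureSide hmax.1 r
  obtain ⟨K, hKPr, hxK, hK, hKcl⟩ :=
    G.exists_connected_closed (hL.finite.subset (Set.sdiff_subset.trans Set.sdiff_subset)) hx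
  exact hL.rootedTriangle_of_component hconn hmax huQ ⟨hrY, hrQ⟩ hur hKPr ⟨x, hxK⟩ hK hKcl

theorem rootedTriangle (hL : IsLobe G Y t) (hY : Y.Nonempty)
    (hnd : Y.Nontrivial ∨ ∃ i j, G.Adj (t i) (t j)) : RootedTriangle G Y t := by
  by_cases hconn : (G.induce Y).Connected
  · rcases Y.subsingleton_or_nontrivial with hs | hnt
    · obtain ⟨y, hy⟩ := hY
      obtain rfl := hs.eq_singleton_of_mem hy
      obtain ⟨i, j, hij⟩ := hnd.resolve_left Set.not_nontrivial_singleton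
      exact hL.rootedTriangle_of_adj rfl
        (hL.seenTerminals_eq_univ subset_rfl ⟨y, rfl⟩ fun _ _ _ h _ => h) hij
    by_contra hRT
    obtain ⟨Q₀, hQ₀⟩ := hL.exists_isPureSide hconn hnt hRT
    have hfin : {Q | IsPureSide G Y t Q}.Finite :=
      hL.finite.finite_subsets.subset fun _ h => h.1
    obtain ⟨Q, -, hQ⟩ := hfin.exists_le_maximal hQ₀
    exact hRT (hL.rootedTriangle_of_maximal hconn hQ)
  · exact hL.rootedTriangle_of_not_connected hY hconn

end IsLobe

theorem isFaithfulMinor_torso {G : SimpleGraph V} {X S : Set V}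
    (hS : ∀ u ∉ X, ∀ v ∈ X, G.Adj u v → v ∈ S) {M₀ : S → Set V}
    (hM₀ : FaithfulModel G S ⊤ M₀) (hout : ∀ w, M₀ w ⊆ insert ↑w Xᶜ) :
    IsFaithfulMinor G X (torso G X) := by
  classical
  obtain ⟨hmem, hconn, hdisj, hadj⟩ := hM₀
  have hnot : ∀ (w : S) (x : X), (x : V) ∉ S → (x : V) ∉ M₀ w := by
    intro w x hxS hx
    rcases hout w hx with h | h
    · exact hxS (h ▸ w.2)
    · exact h x.2
  let M : X → Set V := fun w => if h : (w : V) ∈ S then M₀ ⟨w, h⟩ else {(w : V)}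
  have hMS : ∀ (w : X) (h : (w : V) ∈ S), M w = M₀ ⟨w, h⟩ := fun w h => dif_pos h
  have hMn : ∀ (w : X), (w : V) ∉ S → M w = {(w : V)} := fun w h => dif_neg h
  have hmemM : ∀ w : X, (w : V) ∈ M w := by
    intro w
    by_cases h : (w : V) ∈ S
    · rw [hMS w h]; exact hmem _
    · rw [hMn w h]; rfl
  refine ⟨M, hmemM, fun w => ?_, fun w w' hne => ?_, fun w w' hww' => ?_⟩
  · by_cases h : (w : V) ∈ S
    · rw [hMS w h]; exact hconn _
    · rw [hMn w h]; exact G.connected_induce_singleton _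
  · show Disjoint (M w) (M w')
    have hne' : (w : V) ≠ w' := fun h => hne (Subtype.ext h)
    by_cases h : (w : V) ∈ S <;> by_cases h' : (w' : V) ∈ S
    · rw [hMS w h, hMS w' h']
      exact hdisj fun h'' => hne' (Subtype.mk.inj h'')
    · rw [hMS w h, hMn w' h']
      exact Set.disjoint_singleton_right.mpr (hnot _ w' h')
    · rw [hMn w h, hMS w' h']
      exact Set.disjoint_singleton_left.mpr (hnot _ w h)
    · rw [hMn w h, hMn w' h']
      exact Set.disjoint_singleton.mpr hne'
  obtain ⟨hne, hG | ⟨C, ⟨hCX, -⟩, ⟨-, u, hu, huw⟩, ⟨-, u', hu', hu'w'⟩⟩⟩ := hww'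
  · exact ⟨w, hmemM w, w', hmemM w', hG⟩
  have hw := hS u (hCX hu) w w.2 huw
  have hw' := hS u' (hCX hu') w' w'.2 hu'w'
  rw [hMS w hw, hMS w' hw']
  exact hadj _ _ fun h => hne (Subtype.ext (Subtype.mk.inj h))

lemma KConnected.le_ncard_nbhd {G : SimpleGraph V} {k : ℕ} (h : KConnected k G) {A : Set V}
    (hA : A.Nonempty) (hAN : (A ∪ Nbhd G A)ᶜ.Nonempty) : k ≤ (Nbhd G A).ncard := by
  refine h.2 A (Nbhd G A) (A ∪ Nbhd G A)ᶜ ⟨?_, ?_, ?_, Set.union_compl_self _, ?_⟩ hA hAN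
  · exact Set.disjoint_left.mpr fun v hv hN => hN.1 hv
  · exact Set.disjoint_left.mpr fun v hv hc => hc (Or.inl hv)
  · exact Set.disjoint_left.mpr fun v hv hc => hc (Or.inr hv)
  · exact fun y hy z hz hyz => hz (Or.inr ⟨fun h => hz (Or.inl h), y, hy, hyz⟩)

namespace IsSeparation

variable {G : SimpleGraph V} {Y S Z : Set V}

lemma compl_union (hsep : IsSeparation G Y S Z) : (Z ∪ S)ᶜ = Y := by
  obtain ⟨hYS, hYZ, -, hcover, -⟩ := hsep
  ext v
  simp only [Set.mem_compl_iff, Set.mem_union, not_or]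
  constructor
  · rintro ⟨hvZ, hvS⟩
    rcases hcover ▸ Set.mem_univ v with (h | h) | h
    exacts [h, absurd h hvS, absurd h hvZ]
  · exact fun hv => ⟨Set.disjoint_left.mp hYZ hv, Set.disjoint_left.mp hYS hv⟩

lemma mem_or_mem_of_adj (hsep : IsSeparation G Y S Z) {y v : V} (hy : y ∈ Y) (hyv : G.Adj y v) :
    v ∈ Y ∨ v ∈ S := by
  obtain ⟨-, -, -, hcover, hYZ⟩ := hsep
  rcases hcover ▸ Set.mem_univ v with (h | h) | h
  exacts [Or.inl h, Or.inr h, absurd hyv (hYZ y hy v h)]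

lemma isLobe [Finite V] {t : Fin 3 → V} (hsep : IsSeparation G Y (Set.range t) Z)
    (h3 : KConnected 3 G) (hZ : Z.Nonempty) (ht : Function.Injective t) : IsLobe G Y t := by
  obtain ⟨z, hz⟩ := hZ
  refine ⟨Set.toFinite Y, ht, fun m h => Set.disjoint_left.mp hsep.1 h (Set.mem_range_self m),
    fun y hy v hyv => hsep.mem_or_mem_of_adj hy hyv, fun A hAY hA => h3.le_ncard_nbhd hA ⟨z, ?_⟩⟩
  rintro (h | ⟨-, u, hu, huz⟩)
  exacts [Set.disjoint_left.mp hsep.2.1 (hAY h) hz, hsep.2.2.2.2 u (hAY hu) z hz huz]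

end IsSeparation

lemma nontrivial_or_adj_of_not_degenerate {G : SimpleGraph V} {Y Z : Set V} {t : Fin 3 → V}
    (hY : Y.Nonempty) (hnd : ¬ Degenerate G Y (Set.range t) Z) :
    Y.Nontrivial ∨ ∃ i j, G.Adj (t i) (t j) := by
  by_contra! h
  obtain ⟨y, hy⟩ := hY
  refine hnd ⟨Set.ncard_eq_one.mpr ⟨y, h.1.eq_singleton_of_mem hy⟩, ?_⟩
  rintro _ ⟨i, rfl⟩ _ ⟨j, rfl⟩
  exact h.2 i j

theorem statement12 {V : Type*} [Fintype V] (G : SimpleGraph V)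
    (h3 : KConnected 3 G) (Y S Z : Set V)
    (hsep : IsSeparation G Y S Z) (hY : Y.Nonempty) (hZ : Z.Nonempty)
    (hord : S.ncard = 3) (hnd : ¬ Degenerate G Y S Z) :
    IsFaithfulMinor G (Z ∪ S) (torso G (Z ∪ S)) := by
  obtain ⟨t, ht, rfl⟩ := Set.exists_injective_fin_three_of_ncard_eq_three hord
  have hL := hsep.isLobe h3 hZ ht
  obtain ⟨M₀, hM₀, hout⟩ :=
    (hL.rootedTriangle hY (nontrivial_or_adj_of_not_degenerate hY hnd)).exists_faithfulModel ht
  refine isFaithfulMinor_torso (fun u hu v hv huv => ?_) hM₀ (hsep.compl_union ▸ hout)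
  rw [← Set.mem_compl_iff, hsep.compl_union] at hu
  refine (hsep.mem_or_mem_of_adj hu huv).resolve_left fun h => ?_
  rw [← hsep.compl_union] at h
  exact h hv
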